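/- arXiv:1012.2274 — 2 statements merged into one kernel-verified Lean document; each statement's English description precedes it below -/
import Mathlib

section
/- Let G be a multiplicative abelian group and φ an antisymmetric tricharacter on G. Then for all ξ, η, ζ, χ ∈ G one has φ(ξ, η, χ) · φ(ξη, ζ, χ) · φ(ξ, ηζ, χ)⁻¹ · φ(η, ζ, ξ⁻¹χ)⁻¹ = φ(η, ζ, ξ). (This computes the associativity cocycle u(ξ,η)u(ξη,ζ)u(ξ,ηζ)⁻¹γ_ξ[u(η,ζ)]⁻¹ of the multiplier u(ξ,η) = φ(ξ,η,·): it equals the constant φ(η,ζ,ξ).) -/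
/-- An antisymmetric tricharacter on a multiplicative abelian group `G`: a map
`φ : G → G → G → ℂˣ` multiplicative in each variable, trivial when two arguments
coincide, and inverted under swapping any two arguments. -/
structure IsAntisymTrichar {G : Type*} [CommGroup G] (φ : G → G → G → ℂˣ) : Prop where
  mul_left : ∀ x x' y z, φ (x * x') y z = φ x y z * φ x' y z
  mul_mid : ∀ x y y' z, φ x (y * y') z = φ x y z * φ x y' z
  mul_right : ∀ x y z z', φ x y (z * z') = φ x y z * φ x y z'
  diag₁₂ : ∀ x z, φ x x z = 1
  diag₁₃ : ∀ x y, φ x y x = 1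
  diag₂₃ : ∀ x y, φ x y y = 1
  swap₁₂ : ∀ x y z, φ y x z = (φ x y z)⁻¹
  swap₂₃ : ∀ x y z, φ x z y = (φ x y z)⁻¹
  swap₁₃ : ∀ x y z, φ z y x = (φ x y z)⁻¹


namespace IsAntisymTrichar

variable {G : Type*} [CommGroup G] {φ : G → G → G → ℂˣ}

theorem map_inv_right (hφ : IsAntisymTrichar φ) (x y z : G) : φ x y z⁻¹ = (φ x y z)⁻¹ :=
  map_inv (MonoidHom.mk' (φ x y) (hφ.mul_right x y)) z

end IsAntisymTrichar

/-- The associativity cocycle `u(ξ,η)u(ξη,ζ)u(ξ,ηζ)⁻¹ γ_ξ[u(η,ζ)]⁻¹` of the multiplier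
`u(ξ,η) = φ(ξ,η,·)`, evaluated at `χ`, equals the constant `φ(η,ζ,ξ)`. -/
theorem multiplier_associativity_cocycle {G : Type*} [CommGroup G] (φ : G → G → G → ℂˣ)
    (hφ : IsAntisymTrichar φ) :
    ∀ ξ η ζ χ : G,
      φ ξ η χ * φ (ξ * η) ζ χ * (φ ξ (η * ζ) χ)⁻¹ * (φ η ζ (ξ⁻¹ * χ))⁻¹ = φ η ζ ξ := by
  intro ξ η ζ χ
  rw [hφ.mul_left, hφ.mul_mid, hφ.mul_right, hφ.map_inv_right]
  apply Additive.ofMul.injective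
  simp only [ofMul_mul, ofMul_inv]
  abel
end

section
/- Let G be a finite multiplicative abelian group and φ an antisymmetric tricharacter on G. For kernels K, L : G × G → ℂ define the φ-twisted kernel product (K ⋆ L)(η,ζ) = Σ_{y∈G} φ(η,y,ζ) K(η,y) L(y,ζ), and for ξ ∈ G define (γ_ξ K)(η,ζ) = φ(ξ,η,ζ)⁻¹ K(ξ⁻¹η, ξ⁻¹ζ). Then each γ_ξ is multiplicative for the twisted product: γ_ξ(K ⋆ L) = (γ_ξ K) ⋆ (γ_ξ L) for all K, L. -/
namespace IsAntisymTrichar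

variable {G : Type*} [CommGroup G] {φ : G → G → G → ℂˣ}

theorem inv_left (h : IsAntisymTrichar φ) (x y z : G) : φ x⁻¹ y z = (φ x y z)⁻¹ :=
  (MonoidHom.mk' (φ · y z) fun x x' => h.mul_left x x' y z).map_inv x

theorem inv_mid (h : IsAntisymTrichar φ) (x y z : G) : φ x y⁻¹ z = (φ x y z)⁻¹ :=
  (MonoidHom.mk' (φ x · z) fun y y' => h.mul_mid x y y' z).map_inv y

theorem inv_right (h : IsAntisymTrichar φ) (x y z : G) : φ x y z⁻¹ = (φ x y z)⁻¹ :=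
  (MonoidHom.mk' (φ x y ·) fun z z' => h.mul_right x y z z').map_inv z

theorem cyclic (h : IsAntisymTrichar φ) (x y z : G) : φ y z x = φ x y z := by
  rw [h.swap₁₂, h.swap₁₃, inv_inv]

theorem apply_mul_mul_mul (h : IsAntisymTrichar φ) (g a b c : G) :
    φ (g * a) (g * b) (g * c) = φ g b c * φ a g c * φ a b g * φ a b c := by
  simp only [h.mul_left, h.mul_mid, h.mul_right, h.diag₁₂, h.diag₁₃, h.diag₂₃, one_mul]
  ac_rfl

theorem inv_mul_apply_inv_mul (h : IsAntisymTrichar φ) (ξ a b c : G) :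
    (φ ξ a c)⁻¹ * φ (ξ⁻¹ * a) (ξ⁻¹ * b) (ξ⁻¹ * c) = φ a b c * (φ ξ a b)⁻¹ * (φ ξ b c)⁻¹ := by
  rw [h.apply_mul_mul_mul, h.inv_left, h.inv_mid, h.inv_right, h.swap₁₂ ξ a c, h.cyclic ξ a b,
    inv_inv, inv_mul_eq_iff_eq_mul]
  ac_rfl

end IsAntisymTrichar

variable {G : Type*} [CommGroup G] [Fintype G]

/-- The `φ`-twisted kernel product `(K ⋆ L)(η,ζ) = Σ_y φ(η,y,ζ) K(η,y) L(y,ζ)`. -/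
noncomputable def twistedKernelMul (φ : G → G → G → ℂˣ) (K L : G → G → ℂ) : G → G → ℂ :=
  fun η ζ => ∑ y : G, (φ η y ζ : ℂ) * K η y * L y ζ

/-- The twisted translation `(γ_ξ K)(η,ζ) = φ(ξ,η,ζ)⁻¹ K(ξ⁻¹η, ξ⁻¹ζ)`. -/
noncomputable def twistedGamma (φ : G → G → G → ℂˣ) (ξ : G) (K : G → G → ℂ) : G → G → ℂ :=
  fun η ζ => ((φ ξ η ζ : ℂ))⁻¹ * K (ξ⁻¹ * η) (ξ⁻¹ * ζ)

/-- Each `γ_ξ` is multiplicative for the `φ`-twisted kernel product: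
`γ_ξ(K ⋆ L) = (γ_ξ K) ⋆ (γ_ξ L)`. -/
theorem twistedGamma_mul (φ : G → G → G → ℂˣ) (hφ : IsAntisymTrichar φ)
    (ξ : G) (K L : G → G → ℂ) :
    twistedGamma φ ξ (twistedKernelMul φ K L)
      = twistedKernelMul φ (twistedGamma φ ξ K) (twistedGamma φ ξ L) := by
  funext η ζ
  simp only [twistedGamma, twistedKernelMul, Finset.mul_sum]
  symm
  refine Fintype.sum_equiv (Equiv.mulLeft ξ⁻¹) _ _ fun y => ?_
  have hcocycle : ((φ ξ η ζ : ℂ))⁻¹ * φ (ξ⁻¹ * η) (ξ⁻¹ * y) (ξ⁻¹ * ζ)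
      = φ η y ζ * ((φ ξ η y : ℂ))⁻¹ * ((φ ξ y ζ : ℂ))⁻¹ := by
    exact_mod_cast congrArg Units.val (hφ.inv_mul_apply_inv_mul ξ η y ζ)
  simp only [Equiv.coe_mulLeft]
  linear_combination (-(K (ξ⁻¹ * η) (ξ⁻¹ * y) * L (ξ⁻¹ * y) (ξ⁻¹ * ζ))) * hcocycle
end
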